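/- arXiv:2401.02811 — 8 statements merged into one kernel-verified Lean document; each statement's English description precedes it below -/
import Mathlib

section
/- Fix a natural number k ≥ 2 and let α, α' be natural numbers with k/2 < α ≤ k and α < α' ≤ k. Then for every real p ∈ [0,1], |δ^{k,α}(p)| ≥ |δ^{k,α'}(p)|. -/
/-!
For `p ≥ 1/2` every summand of `δ^{k,α}(p)` is nonnegative: with `q = 1 - p ≤ p` and
`j = k - ℓ + 1 ≤ ℓ`, it is `C(k,ℓ) (pq)^j (p^(ℓ-j) - q^(ℓ-j))`. Hence on `[1/2, 1]` the value
`δ^{k,α}(p)` is nonnegative and decreases as the threshold `α` grows, since raising `α` only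
drops summands. The case `p ≤ 1/2` follows from the antisymmetry `δ(1 - p) = -δ(p)`.
-/

/-- The expected relative progress of one Slush round with sample size `k`,
majority threshold `α`, at fraction `p` of parties holding opinion 1. -/
noncomputable def slushDelta (k α : ℕ) (p : ℝ) : ℝ :=
  ∑ ℓ ∈ Finset.Icc α k,
    (k.choose ℓ : ℝ) * (p ^ ℓ * (1 - p) ^ (k - ℓ + 1) - (1 - p) ^ ℓ * p ^ (k - ℓ + 1))

theorem pow_mul_pow_le_pow_mul_pow {p q : ℝ} (hq : 0 ≤ q) (hqp : q ≤ p) {j ℓ : ℕ} (hjℓ : j ≤ ℓ) :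
    q ^ ℓ * p ^ j ≤ p ^ ℓ * q ^ j := by
  obtain ⟨m, rfl⟩ := Nat.exists_eq_add_of_le hjℓ
  have hpq : 0 ≤ (p * q) ^ j := pow_nonneg (mul_nonneg (hq.trans hqp) hq) j
  calc q ^ (j + m) * p ^ j = (p * q) ^ j * q ^ m := by ring
    _ ≤ (p * q) ^ j * p ^ m := mul_le_mul_of_nonneg_left (pow_le_pow_left₀ hq hqp m) hpq
    _ = p ^ (j + m) * q ^ j := by ring

theorem slushDelta_summand_nonneg {k ℓ : ℕ} {p : ℝ} (hp : 1 / 2 ≤ p) (hp1 : p ≤ 1)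
    (hℓ : k < 2 * ℓ) :
    0 ≤ (k.choose ℓ : ℝ) * (p ^ ℓ * (1 - p) ^ (k - ℓ + 1) - (1 - p) ^ ℓ * p ^ (k - ℓ + 1)) :=
  mul_nonneg (Nat.cast_nonneg _) <| sub_nonneg.2 <|
    pow_mul_pow_le_pow_mul_pow (by linarith) (by linarith) (by omega)

theorem slushDelta_nonneg {k α : ℕ} {p : ℝ} (hp : 1 / 2 ≤ p) (hp1 : p ≤ 1)
    (hα : k < 2 * α) : 0 ≤ slushDelta k α p :=
  Finset.sum_nonneg fun ℓ hℓ ↦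
    slushDelta_summand_nonneg hp hp1 (by rw [Finset.mem_Icc] at hℓ; omega)

theorem slushDelta_antitone_threshold {k α α' : ℕ} {p : ℝ} (hp : 1 / 2 ≤ p) (hp1 : p ≤ 1)
    (hα : k < 2 * α) (hαα' : α ≤ α') :
    slushDelta k α' p ≤ slushDelta k α p :=
  Finset.sum_le_sum_of_subset_of_nonneg (Finset.Icc_subset_Icc_left hαα') fun ℓ hℓ _ ↦
    slushDelta_summand_nonneg hp hp1 (by rw [Finset.mem_Icc] at hℓ; omega)

theorem abs_slushDelta_le_of_half_le {k α α' : ℕ} {p : ℝ} (hp : 1 / 2 ≤ p) (hp1 : p ≤ 1)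
    (hα : k < 2 * α) (hαα' : α ≤ α') :
    |slushDelta k α' p| ≤ |slushDelta k α p| := by
  rw [abs_of_nonneg (slushDelta_nonneg hp hp1 (by omega)),
    abs_of_nonneg (slushDelta_nonneg hp hp1 hα)]
  exact slushDelta_antitone_threshold hp hp1 hα hαα'

theorem slushDelta_one_sub (k α : ℕ) (p : ℝ) : slushDelta k α (1 - p) = -slushDelta k α p := by
  rw [slushDelta, slushDelta, ← Finset.sum_neg_distrib]
  refine Finset.sum_congr rfl fun ℓ _ ↦ ?_
  rw [sub_sub_cancel]
  ring

theorem slushDelta_domination_general (k α α' : ℕ) (hα : k < 2 * α)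
    (hαα' : α < α') (p : ℝ) (hp0 : 0 ≤ p) (hp1 : p ≤ 1) :
    |slushDelta k α' p| ≤ |slushDelta k α p| := by
  rcases le_total (1 / 2 : ℝ) p with hp | hp
  · exact abs_slushDelta_le_of_half_le hp hp1 hα hαα'.le
  · have h := abs_slushDelta_le_of_half_le (p := 1 - p) (by linarith) (by linarith) hα hαα'.le
    rwa [slushDelta_one_sub, slushDelta_one_sub, abs_neg, abs_neg] at h

/-- for fixed `k`, with `k/2 < α ≤ k` and `α < α' ≤ k`,
`|δ^{k,α}(p)| ≥ |δ^{k,α'}(p)|` for all `p ∈ [0,1]`. -/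
theorem slushDelta_domination (k α α' : ℕ) (hk : 2 ≤ k) (hα : k < 2 * α) (hαk : α ≤ k)
    (hαα' : α < α') (hα'k : α' ≤ k) (p : ℝ) (hp0 : 0 ≤ p) (hp1 : p ≤ 1) :
    |slushDelta k α' p| ≤ |slushDelta k α p| :=
  slushDelta_domination_general k α α' hα hαα' p hp0 hp1
end

section
/- Let α ≥ 2 be a natural number and let k = 2α − 1 (so k is odd and α = ⌈(k+1)/2⌉). Then for every real number p, δ^{k,α}(p) = (∑_{ℓ=α}^{k} (k choose ℓ) p^ℓ (1−p)^{k−ℓ}) − p. -/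
/-!
Write `T(α, p)` for the upper binomial tail `ℙ[Bin(k, p) ≥ α]`. Pulling one factor `1 - p`,
resp. `p`, out of the two terms of `δ` gives `δ = (1 - p) T(α, p) - p T(α, 1 - p)`, and by the
symmetry `ℓ ↦ k - ℓ` of the binomial distribution `T(α, 1 - p) = 1 - T(k + 1 - α, p)`.
For `k = 2α - 1` the threshold is self-dual, `k + 1 - α = α`, so `δ = T(α, p) - p`.
-/

open Finset

noncomputable def binomUpperTail (k α : ℕ) (p : ℝ) : ℝ :=
  ∑ ℓ ∈ Icc α k, (k.choose ℓ : ℝ) * p ^ ℓ * (1 - p) ^ (k - ℓ)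

theorem binomUpperTail_one_sub (k α : ℕ) (p : ℝ) :
    binomUpperTail k α (1 - p) = 1 - binomUpperTail k (k + 1 - α) p := by
  set b : ℕ → ℝ := fun j ↦ (k.choose j : ℝ) * p ^ j * (1 - p) ^ (k - j)
  have hreflect : binomUpperTail k α (1 - p) = ∑ j ∈ range (k + 1 - α), b j := by
    have h := sum_Ico_reflect b α (le_refl (k + 1))
    rw [Nat.sub_self, Nat.Ico_zero_eq_range] at h
    rw [← h, binomUpperTail, ← Ico_add_one_right_eq_Icc]
    refine sum_congr rfl fun ℓ hℓ ↦ ?_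
    have hℓk : ℓ ≤ k := Nat.lt_succ_iff.mp (mem_Ico.mp hℓ).2
    simp only [b, Nat.choose_symm hℓk, Nat.sub_sub_self hℓk, sub_sub_cancel]
    ring
  have hupper : binomUpperTail k (k + 1 - α) p = ∑ j ∈ Ico (k + 1 - α) (k + 1), b j := by
    rw [binomUpperTail, ← Ico_add_one_right_eq_Icc]
  have htotal : ∑ j ∈ range (k + 1), b j = 1 := by
    have h := add_pow p (1 - p) k
    rw [add_sub_cancel, one_pow] at h
    rw [h]
    exact sum_congr rfl fun j _ ↦ by ring
  rw [hreflect, hupper, eq_sub_iff_add_eq, sum_range_add_sum_Ico b (Nat.sub_le _ _), htotal]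

theorem slushDelta_eq_binomUpperTail (k α : ℕ) (p : ℝ) :
    slushDelta k α p = (1 - p) * binomUpperTail k α p - p * binomUpperTail k α (1 - p) := by
  simp only [slushDelta, binomUpperTail, mul_sum, ← sum_sub_distrib]
  refine sum_congr rfl fun ℓ _ ↦ ?_
  rw [pow_succ, pow_succ, sub_sub_cancel]
  ring

/-- for `α ≥ 2` and odd `k = 2α − 1`,
`δ^{k,α}(p) = (∑_{ℓ=α}^{k} C(k,ℓ) p^ℓ (1−p)^{k−ℓ}) − p`. -/
theorem slushDelta_short_form_odd (α : ℕ) (hα : 2 ≤ α) (k : ℕ) (hk : k = 2 * α - 1)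
    (p : ℝ) :
    slushDelta k α p
      = (∑ ℓ ∈ Finset.Icc α k, (k.choose ℓ : ℝ) * p ^ ℓ * (1 - p) ^ (k - ℓ)) - p := by
  have hdual : k + 1 - α = α := by omega
  rw [slushDelta_eq_binomUpperTail, binomUpperTail_one_sub, hdual, ← binomUpperTail]
  ring
end

section
/- Let α ≥ 2 be a natural number and let k = 2α − 1. Then for every real number p, δ^{k,α}(p) = δ^{k−1,α}(p); that is, the expected progress function of Slush with an odd sample size k = 2α−1 coincides with that for the even sample size k−1 = 2α−2 with the same threshold α. -/
private noncomputable def slushG1 (β : ℕ) (p : ℝ) (m : ℕ) : ℝ :=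
  ((2*β+2).choose m : ℝ) *
    (p^(m+1) * (1-p)^(2*β+2-m+1) - (1-p)^(m+1) * p^(2*β+2-m+1))

private noncomputable def slushG2 (β : ℕ) (p : ℝ) (m : ℕ) : ℝ :=
  ((2*β+2).choose (m+1) : ℝ) *
    (p^(m+1) * (1-p)^(2*β+2-m+1) - (1-p)^(m+1) * p^(2*β+2-m+1))

/-- for `α ≥ 2` and `k = 2α − 1`, the expected progress functions for
sample sizes `k` and `k − 1` (with the same threshold `α`) coincide:
`δ^{k,α}(p) = δ^{k−1,α}(p)` for every real `p`. -/
theorem slushDelta_even_odd (α : ℕ) (hα : 2 ≤ α) (k : ℕ) (hk : k = 2 * α - 1) (p : ℝ) :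
    slushDelta k α p = slushDelta (k - 1) α p := by
  obtain ⟨β, rfl⟩ : ∃ β, α = β + 2 := ⟨α - 2, by omega⟩
  obtain rfl : k = 2 * β + 3 := by omega
  rw [show 2*β + 3 - 1 = 2*β + 2 from by omega]
  unfold slushDelta
  -- reindex the LHS via ℓ = m + 1
  rw [show Finset.Icc (β+2) (2*β+3) =
        Finset.map (addRightEmbedding 1) (Finset.Icc (β+1) (2*β+2)) from by
      rw [Finset.map_add_right_Icc],
    Finset.sum_map]
  simp only [addRightEmbedding_apply]
  -- Pascal's rule per term
  have hPascal : ∀ m ∈ Finset.Icc (β+1) (2*β+2),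
      ((2*β+3).choose (m+1) : ℝ) *
        (p^(m+1) * (1-p)^(2*β+3-(m+1)+1) - (1-p)^(m+1) * p^(2*β+3-(m+1)+1))
      = slushG1 β p m + slushG2 β p m := by
    intro m hm
    simp only [Finset.mem_Icc] at hm
    have hc : (2*β+3).choose (m+1) = (2*β+2).choose m + (2*β+2).choose (m+1) := by
      rw [show 2*β+3 = (2*β+2)+1 from by ring]
      exact Nat.choose_succ_succ _ _
    rw [show 2*β+3-(m+1)+1 = 2*β+2-m+1 from by omega, hc]
    push_cast
    unfold slushG1 slushG2
    ring
  rw [Finset.sum_congr rfl hPascal, Finset.sum_add_distrib]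
  -- the G1 sum: peel off the bottom index β+1, whose term vanishes
  have hG1split : ∑ m ∈ Finset.Icc (β+1) (2*β+2), slushG1 β p m
      = ∑ m ∈ Finset.Icc (β+2) (2*β+2), slushG1 β p m := by
    rw [← Finset.Ioc_insert_left (by omega : β+1 ≤ 2*β+2),
      Finset.sum_insert (by simp), ← Finset.Icc_add_one_left_eq_Ioc]
    have h0 : slushG1 β p (β+1) = 0 := by
      unfold slushG1
      rw [show 2*β+2-(β+1)+1 = β+2 from by omega]
      ring
    rw [h0, zero_add]
    rfl
  rw [hG1split]
  -- the G2 sum: peel off the top index 2β+2, whose term vanishes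
  have hG2split : ∑ m ∈ Finset.Icc (β+1) (2*β+2), slushG2 β p m
      = ∑ m ∈ Finset.Icc (β+1) (2*β+1), slushG2 β p m := by
    rw [show 2*β+2 = (2*β+1)+1 from by ring,
      Finset.sum_Icc_succ_top (by omega) (slushG2 β p)]
    have h0 : slushG2 β p (2*β+1+1) = 0 := by
      unfold slushG2
      rw [Nat.choose_eq_zero_of_lt (by omega)]
      push_cast
      ring
    rw [h0, add_zero]
  rw [hG2split]
  -- reindex the G1 sum and the RHS via ℓ = m + 1
  rw [show Finset.Icc (β+2) (2*β+2) =
        Finset.map (addRightEmbedding 1) (Finset.Icc (β+1) (2*β+1)) from by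
      rw [Finset.map_add_right_Icc],
    Finset.sum_map, Finset.sum_map]
  simp only [addRightEmbedding_apply]
  rw [← Finset.sum_add_distrib]
  refine Finset.sum_congr rfl ?_
  intro m hm
  simp only [Finset.mem_Icc] at hm
  obtain ⟨j, hj⟩ : ∃ j, 2*β+1 = m + j := ⟨2*β+1 - m, by omega⟩
  unfold slushG1 slushG2
  rw [show 2*β+2-(m+1)+1 = j+1 from by omega,
    show 2*β+2-m+1 = j+2 from by omega]
  ring
end

section
/- Let α and α' be natural numbers with α > α' > 1, and set k = 2α − 1 and k' = 2α' − 1. Then for every real p ∈ [0,1], |δ^{k,α}(p)| ≥ |δ^{k',α'}(p)|. The same inequality holds in the even case, i.e., for k = 2(α−1) and k' = 2(α'−1): |δ^{k,α}(p)| ≥ |δ^{k',α'}(p)| for all p ∈ [0,1]. -/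
open Finset

noncomputable def binomTail (k α : ℕ) (x : ℝ) : ℝ :=
  ∑ ℓ ∈ Icc α k, (k.choose ℓ : ℝ) * x ^ ℓ * (1 - x) ^ (k - ℓ)

theorem binomTail_eq_add_binomTail_succ (k α : ℕ) (x : ℝ) :
    binomTail k α x = k.choose α * x ^ α * (1 - x) ^ (k - α) + binomTail k (α + 1) x := by
  rcases le_or_gt α k with h | h
  · rw [binomTail, binomTail, ← add_sum_Ioc_eq_sum_Icc h, Icc_add_one_left_eq_Ioc]
  · simp [binomTail, Nat.choose_eq_zero_of_lt h, h, Nat.lt_succ_of_lt h]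

theorem binomTail_succ_succ (k α : ℕ) (x : ℝ) :
    binomTail (k + 1) (α + 1) x = x * binomTail k α x + (1 - x) * binomTail k (α + 1) x := by
  have hshift (f : ℕ → ℝ) : ∑ ℓ ∈ Icc (α + 1) (k + 1), f ℓ = ∑ m ∈ Icc α k, f (m + 1) := by
    rw [← map_add_right_Icc, sum_map]; rfl
  have hext : binomTail k (α + 1) x =
      ∑ ℓ ∈ Icc (α + 1) (k + 1), (k.choose ℓ : ℝ) * x ^ ℓ * (1 - x) ^ (k - ℓ) := by
    refine sum_subset (Icc_subset_Icc_right k.le_succ) fun ℓ hℓ hℓ' => ?_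
    simp only [mem_Icc, not_and, not_le] at hℓ hℓ'
    simp [Nat.choose_eq_zero_of_lt (hℓ' hℓ.1)]
  rw [binomTail, hext, hshift, hshift, binomTail, mul_sum, mul_sum, ← sum_add_distrib]
  refine sum_congr rfl fun m hm => ?_
  rw [Nat.choose_succ_succ', Nat.cast_add]
  rcases (mem_Icc.1 hm).2.lt_or_eq with hlt | rfl
  · rw [Nat.add_sub_add_right, show k - m = k - (m + 1) + 1 by omega]; ring
  · simp [pow_succ']

theorem slushDelta_eq_binomTail (k α : ℕ) (p : ℝ) :
    slushDelta k α p = (1 - p) * binomTail k α p - p * binomTail k α (1 - p) := by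
  simp only [slushDelta, binomTail, sub_sub_cancel, mul_sum, ← sum_sub_distrib]
  refine sum_congr rfl fun ℓ _ => by ring

theorem slushDelta_even_eq_odd (n : ℕ) (p : ℝ) :
    slushDelta (2 * n) (n + 1) p = slushDelta (2 * n + 1) (n + 1) p := by
  have tail_step (x : ℝ) : binomTail (2 * n + 1) (n + 1) x
      = binomTail (2 * n) (n + 1) x + (2 * n).choose n * x ^ (n + 1) * (1 - x) ^ n := by
    rw [binomTail_succ_succ, binomTail_eq_add_binomTail_succ (2 * n) n,
      show 2 * n - n = n by omega]
    ring
  rw [slushDelta_eq_binomTail, slushDelta_eq_binomTail, tail_step, tail_step, sub_sub_cancel]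
  ring

theorem slushDelta_odd_succ (n : ℕ) (p : ℝ) :
    slushDelta (2 * (n + 1) + 1) (n + 1 + 1) p = slushDelta (2 * n + 1) (n + 1) p
      + (2 * p - 1) * (2 * n + 1).choose (n + 1) * (p * (1 - p)) ^ (n + 1) := by
  have tail_step (x : ℝ) : binomTail (2 * (n + 1) + 1) (n + 1 + 1) x
      = binomTail (2 * n + 1) (n + 1) x
        + (2 * n + 2).choose (n + 1) * x ^ (n + 2) * (1 - x) ^ (n + 1)
        - (2 * n + 1).choose (n + 1) * x ^ (n + 1) * (1 - x) ^ (n + 1) := by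
    rw [show 2 * (n + 1) + 1 = 2 * n + 2 + 1 by ring, binomTail_succ_succ,
      binomTail_eq_add_binomTail_succ (2 * n + 2) (n + 1), binomTail_succ_succ,
      binomTail_eq_add_binomTail_succ (2 * n + 1) (n + 1),
      show 2 * n + 2 - (n + 1) = n + 1 by omega, show 2 * n + 1 - (n + 1) = n by omega]
    ring
  -- the `(2n+2).choose (n+1)` terms cancel between the contributions of `p` and `1 - p`
  rw [slushDelta_eq_binomTail, slushDelta_eq_binomTail, tail_step, tail_step, sub_sub_cancel, mul_pow]
  ring

noncomputable def slushSeries (n : ℕ) (p : ℝ) : ℝ :=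
  ∑ j ∈ range n, ((2 * j + 1).choose (j + 1) : ℝ) * (p * (1 - p)) ^ (j + 1)

theorem slushDelta_odd_eq (n : ℕ) (p : ℝ) :
    slushDelta (2 * n + 1) (n + 1) p = (2 * p - 1) * slushSeries n p := by
  induction n with
  | zero => simp [slushDelta, slushSeries]; ring
  | succ n ih => rw [slushDelta_odd_succ, ih, slushSeries, slushSeries, sum_range_succ]; ring

theorem slushSeries_mono {p : ℝ} (hp₀ : 0 ≤ p) (hp₁ : p ≤ 1) : Monotone (slushSeries · p) :=
  fun _ _ hmn => sum_le_sum_of_subset_of_nonneg (range_subset_range.2 hmn) fun _ _ _ => by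
    have := mul_nonneg hp₀ (sub_nonneg.2 hp₁); positivity

theorem slushSeries_nonneg {p : ℝ} (hp₀ : 0 ≤ p) (hp₁ : p ≤ 1) (n : ℕ) : 0 ≤ slushSeries n p := by
  simpa [slushSeries] using slushSeries_mono hp₀ hp₁ n.zero_le

theorem abs_slushDelta_odd_mono {m n : ℕ} (hmn : m ≤ n) {p : ℝ} (hp₀ : 0 ≤ p) (hp₁ : p ≤ 1) :
    |slushDelta (2 * m + 1) (m + 1) p| ≤ |slushDelta (2 * n + 1) (n + 1) p| := by
  rw [slushDelta_odd_eq, slushDelta_odd_eq, abs_mul, abs_mul,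
    abs_of_nonneg (slushSeries_nonneg hp₀ hp₁ m), abs_of_nonneg (slushSeries_nonneg hp₀ hp₁ n)]
  exact mul_le_mul_of_nonneg_left (slushSeries_mono hp₀ hp₁ hmn) (abs_nonneg _)

/-- for `α > α' > 1`, with `k = 2α − 1`, `k' = 2α' − 1` (odd case) and
`k = 2(α−1)`, `k' = 2(α'−1)` (even case), `|δ^{k,α}(p)| ≥ |δ^{k',α'}(p)|` on `[0,1]`. -/
theorem slushDelta_domination_two (α α' : ℕ) (hα' : 1 < α') (hαα' : α' < α) :
    (∀ p : ℝ, 0 ≤ p → p ≤ 1 →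
      |slushDelta (2 * α' - 1) α' p| ≤ |slushDelta (2 * α - 1) α p|)
    ∧ (∀ p : ℝ, 0 ≤ p → p ≤ 1 →
      |slushDelta (2 * (α' - 1)) α' p| ≤ |slushDelta (2 * (α - 1)) α p|) := by
  obtain ⟨m, rfl⟩ : ∃ m, α' = m + 1 := ⟨α' - 1, by omega⟩
  obtain ⟨n, rfl⟩ : ∃ n, α = n + 1 := ⟨α - 1, by omega⟩
  have hmn : m ≤ n := by omega
  simp only [Nat.add_sub_cancel, show ∀ j, 2 * (j + 1) - 1 = 2 * j + 1 from fun j => by omega,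
    slushDelta_even_eq_odd, and_self]
  exact fun p hp₀ hp₁ => abs_slushDelta_odd_mono hmn hp₀ hp₁
end

section
/- Let α ≥ 2 be a natural number and let k = 2α − 1. Then for every real p with 1/2 ≤ p ≤ 1, the derivative of the polynomial function p ↦ δ^{k,α}(p) satisfies (d/dp) δ^{k,α}(p) ≤ k − 1. -/
/-- for `α ≥ 2`, `k = 2α − 1`, and every `p ∈ [1/2, 1]`,
the derivative of `p ↦ δ^{k,α}(p)` is at most `k − 1`. -/
theorem slushDelta_deriv_bound (α : ℕ) (hα : 2 ≤ α) (k : ℕ) (hk : k = 2 * α - 1)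
    (p : ℝ) (hp : 1 / 2 ≤ p) (hp1 : p ≤ 1) :
    deriv (fun q : ℝ => slushDelta k α q) p ≤ (k : ℝ) - 1 := by
  have hαk : α ≤ k := by omega
  have hk3 : 3 ≤ k := by omega
  set F : ℝ → ℝ := fun q => ∑ ℓ ∈ Finset.Icc α k,
      (k.choose ℓ : ℝ) * q ^ ℓ * (1 - q) ^ (k - ℓ) with hF
  -- Step 1: slushDelta k α q = F q - q for all q
  have hid : ∀ q : ℝ, slushDelta k α q = F q - q := by
    intro q
    have hFq : F q = ∑ ℓ ∈ Finset.Icc α k, (k.choose ℓ : ℝ) * q ^ ℓ * (1 - q) ^ (k - ℓ) := rfl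
    have hG : (∑ ℓ ∈ Finset.Icc α k, (k.choose ℓ : ℝ) * (1 - q) ^ ℓ * q ^ (k - ℓ))
        = ∑ m ∈ Finset.range α, (k.choose m : ℝ) * q ^ m * (1 - q) ^ (k - m) := by
      refine Finset.sum_nbij' (fun ℓ => k - ℓ) (fun m => k - m) ?_ ?_ ?_ ?_ ?_
      · intro a ha
        simp only [Finset.mem_Icc] at ha
        simp only [Finset.mem_range]
        omega
      · intro a ha
        simp only [Finset.mem_range] at ha
        simp only [Finset.mem_Icc]
        omega
      · intro a ha
        simp only [Finset.mem_Icc] at ha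
        show k - (k - a) = a
        omega
      · intro a ha
        simp only [Finset.mem_range] at ha
        show k - (k - a) = a
        omega
      · intro a ha
        simp only [Finset.mem_Icc] at ha
        show (k.choose a : ℝ) * (1 - q) ^ a * q ^ (k - a)
            = (k.choose (k - a) : ℝ) * q ^ (k - a) * (1 - q) ^ (k - (k - a))
        have h1 : k.choose (k - a) = k.choose a := Nat.choose_symm ha.2
        have h2 : k - (k - a) = a := by omega
        rw [h1, h2]
        ring
    have hone : (∑ ℓ ∈ Finset.range (k + 1), (k.choose ℓ : ℝ) * q ^ ℓ * (1 - q) ^ (k - ℓ)) = 1 := by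
      calc (∑ ℓ ∈ Finset.range (k + 1), (k.choose ℓ : ℝ) * q ^ ℓ * (1 - q) ^ (k - ℓ))
          = ∑ m ∈ Finset.range (k + 1), q ^ m * (1 - q) ^ (k - m) * (k.choose m : ℝ) :=
            Finset.sum_congr rfl fun i _ => by ring
        _ = (q + (1 - q)) ^ k := (add_pow q (1 - q) k).symm
        _ = 1 := by norm_num
    have hsplit : (∑ ℓ ∈ Finset.range α, (k.choose ℓ : ℝ) * q ^ ℓ * (1 - q) ^ (k - ℓ))
        + (∑ ℓ ∈ Finset.Icc α k, (k.choose ℓ : ℝ) * q ^ ℓ * (1 - q) ^ (k - ℓ)) = 1 := by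
      rw [← Finset.Ico_add_one_right_eq_Icc, Finset.range_eq_Ico,
        Finset.sum_Ico_consecutive _ (Nat.zero_le α) (show α ≤ k + 1 by omega),
        ← Finset.range_eq_Ico]
      exact hone
    have hGval : (∑ ℓ ∈ Finset.Icc α k, (k.choose ℓ : ℝ) * (1 - q) ^ ℓ * q ^ (k - ℓ))
        = 1 - F q := by rw [hG, hFq]; linarith [hsplit]
    -- now expand slushDelta
    unfold slushDelta
    have hexpand : ∑ ℓ ∈ Finset.Icc α k,
        (k.choose ℓ : ℝ) * (q ^ ℓ * (1 - q) ^ (k - ℓ + 1) - (1 - q) ^ ℓ * q ^ (k - ℓ + 1))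
        = (1 - q) * F q - q * (∑ ℓ ∈ Finset.Icc α k,
            (k.choose ℓ : ℝ) * (1 - q) ^ ℓ * q ^ (k - ℓ)) := by
      rw [hFq, Finset.mul_sum, Finset.mul_sum, ← Finset.sum_sub_distrib]
      refine Finset.sum_congr rfl fun ℓ _ => ?_
      rw [pow_succ, pow_succ]
      ring
    rw [hexpand, hGval]
    ring
  -- Step 2: derivative of F at p
  set g : ℕ → ℝ := fun m => (k : ℝ) * ((k - 1).choose (m - 1) : ℝ) * p ^ (m - 1) * (1 - p) ^ (k - m)
    with hg
  have hterm : ∀ ℓ ∈ Finset.Icc α k,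
      HasDerivAt (fun q : ℝ => (k.choose ℓ : ℝ) * q ^ ℓ * (1 - q) ^ (k - ℓ))
        (g ℓ - g (ℓ + 1)) p := by
    intro ℓ hℓ
    obtain ⟨hℓ1, hℓ2⟩ := Finset.mem_Icc.mp hℓ
    have hA : HasDerivAt (fun q : ℝ => (k.choose ℓ : ℝ) * q ^ ℓ)
        ((k.choose ℓ : ℝ) * ((ℓ : ℝ) * p ^ (ℓ - 1))) p := (hasDerivAt_pow ℓ p).const_mul _
    have hin : HasDerivAt (fun q : ℝ => 1 - q) (-1) p := by
      simpa using (hasDerivAt_id p).const_sub 1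
    have hB : HasDerivAt (fun q : ℝ => (1 - q) ^ (k - ℓ))
        (-(((k - ℓ : ℕ) : ℝ) * (1 - p) ^ (k - ℓ - 1))) p := by
      have := (hasDerivAt_pow (k - ℓ) (1 - p)).comp p hin
      simpa [mul_comm, Function.comp_def] using this
    have hAB := hA.mul hB
    convert hAB using 1
    · rfl
    · rfl
    · rfl
    -- value identity
    have nid1 : k * ((k - 1).choose (ℓ - 1)) = ℓ * k.choose ℓ := by
      have h := Nat.add_one_mul_choose_eq (k - 1) (ℓ - 1)
      have e1 : k - 1 + 1 = k := by omega
      have e2 : ℓ - 1 + 1 = ℓ := by omega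
      rw [e1, e2] at h
      rw [h]; ring
    have nid2 : k * ((k - 1).choose ℓ) = (k - ℓ) * k.choose ℓ := by
      have h := Nat.add_one_mul_choose_eq (k - 1) ℓ
      have e1 : k - 1 + 1 = k := by omega
      rw [e1] at h
      have h2 := Nat.choose_succ_right_eq k ℓ
      rw [h, h2]; ring
    have e1 : ((k : ℝ)) * ((k - 1).choose (ℓ - 1) : ℝ) = (ℓ : ℝ) * (k.choose ℓ : ℝ) := by
      exact_mod_cast congrArg (Nat.cast (R := ℝ)) nid1
    have e2 : ((k : ℝ)) * ((k - 1).choose ℓ : ℝ) = ((k - ℓ : ℕ) : ℝ) * (k.choose ℓ : ℝ) := by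
      exact_mod_cast congrArg (Nat.cast (R := ℝ)) nid2
    simp only [hg, Nat.add_sub_cancel, ← Nat.sub_sub]
    linear_combination ((1 - p) ^ (k - ℓ) * p ^ (ℓ - 1)) * e1
      - (p ^ ℓ * (1 - p) ^ (k - ℓ - 1)) * e2
  have hF' : HasDerivAt F (g α) p := by
    have hs : HasDerivAt F (∑ ℓ ∈ Finset.Icc α k, (g ℓ - g (ℓ + 1))) p :=
      HasDerivAt.fun_sum hterm
    have htel : (∑ ℓ ∈ Finset.Icc α k, (g ℓ - g (ℓ + 1))) = g α := by
      rw [← Finset.Ico_add_one_right_eq_Icc, Finset.sum_Ico_eq_sum_range]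
      have h := Finset.sum_range_sub' (fun i => g (α + i)) (k + 1 - α)
      have hre : (∑ i ∈ Finset.range (k + 1 - α), (g (α + i) - g (α + i + 1)))
          = ∑ i ∈ Finset.range (k + 1 - α), (g (α + i) - g (α + (i + 1))) := by
        refine Finset.sum_congr rfl fun i _ => by rw [add_assoc]
      rw [hre, h]
      have hakk : α + (k + 1 - α) = k + 1 := by omega
      rw [hakk]
      have hz : g (k + 1) = 0 := by
        have h0 : (k - 1).choose (k + 1 - 1) = 0 := by
          have hkk : k + 1 - 1 = k := by omega
          rw [hkk]; exact Nat.choose_eq_zero_of_lt (by omega)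
        show (k : ℝ) * ((k - 1).choose (k + 1 - 1) : ℝ) * p ^ (k + 1 - 1) * (1 - p) ^ (k - (k + 1))
            = 0
        rw [h0]; simp
      rw [hz, add_zero, sub_zero]
    rwa [htel] at hs
  -- Step 3: derivative of slushDelta
  have hfun : (fun q : ℝ => slushDelta k α q) = fun q => F q - q := funext hid
  have hD : HasDerivAt (fun q : ℝ => slushDelta k α q) (g α - 1) p := by
    rw [hfun]
    exact hF'.sub (hasDerivAt_id p)
  rw [hD.deriv]
  -- Step 4: bound g α ≤ k
  have hkα : k - α = α - 1 := by omega
  have hga : g α = (k : ℝ) * ((k - 1).choose (α - 1) : ℝ) * (p * (1 - p)) ^ (α - 1) := by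
    have h0 : g α = (k : ℝ) * ((k - 1).choose (α - 1) : ℝ) * p ^ (α - 1) * (1 - p) ^ (k - α) :=
      rfl
    rw [h0, hkα, mul_pow]
    ring
  have hchoose : ((k - 1).choose (α - 1) : ℝ) ≤ 4 ^ (α - 1) := by
    have hkm : k - 1 = 2 * (α - 1) := by omega
    have h1 : (k - 1).choose (α - 1) ≤ ∑ m ∈ Finset.range (k - 1 + 1), (k - 1).choose m := by
      refine Finset.single_le_sum (fun i _ => Nat.zero_le _) ?_
      simp only [Finset.mem_range]
      omega
    rw [Nat.sum_range_choose] at h1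
    have h2 : (2 : ℕ) ^ (k - 1) = 4 ^ (α - 1) := by
      rw [hkm, pow_mul]
      norm_num
    rw [h2] at h1
    calc ((k - 1).choose (α - 1) : ℝ) ≤ ((4 : ℕ) ^ (α - 1) : ℝ) := by exact_mod_cast h1
      _ = 4 ^ (α - 1) := by push_cast; ring
  have hpq0 : 0 ≤ p * (1 - p) := by nlinarith
  have hpq : p * (1 - p) ≤ 1 / 4 := by nlinarith
  have hpow : (p * (1 - p)) ^ (α - 1) ≤ (1 / 4 : ℝ) ^ (α - 1) :=
    pow_le_pow_left₀ hpq0 hpq _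
  have hbound : g α ≤ (k : ℝ) := by
    rw [hga]
    have h1 : ((k - 1).choose (α - 1) : ℝ) * (p * (1 - p)) ^ (α - 1)
        ≤ 4 ^ (α - 1) * (1 / 4 : ℝ) ^ (α - 1) := by
      apply mul_le_mul hchoose hpow (pow_nonneg hpq0 _) (by positivity)
    have h2 : (4 : ℝ) ^ (α - 1) * (1 / 4 : ℝ) ^ (α - 1) = 1 := by
      rw [← mul_pow]; norm_num
    rw [h2] at h1
    calc (k : ℝ) * ((k - 1).choose (α - 1) : ℝ) * (p * (1 - p)) ^ (α - 1)
        = (k : ℝ) * (((k - 1).choose (α - 1) : ℝ) * (p * (1 - p)) ^ (α - 1)) := by ring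
      _ ≤ (k : ℝ) * 1 := mul_le_mul_of_nonneg_left h1 (Nat.cast_nonneg _)
      _ = (k : ℝ) := mul_one _
  linarith
end

section
/- Let α ≥ 2 be a natural number and let k = 2α − 1. Then for every real number p, the second derivative of the polynomial function p ↦ δ^{k,α}(p) equals (k choose α) · α · (α−1) · p^{α−2} (1−p)^{α−2} (1 − 2p). In particular, the second derivative is ≤ 0 for every p ∈ [1/2, 1]. -/
open Finset

lemma aux_sum_one (α k : ℕ) (hα : 1 ≤ α) (hk : k = 2 * α - 1) (p : ℝ) :
    (∑ ℓ ∈ Finset.Icc α k, (k.choose ℓ : ℝ) * (p ^ ℓ * (1 - p) ^ (k - ℓ)))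
      + (∑ ℓ ∈ Finset.Icc α k, (k.choose ℓ : ℝ) * ((1 - p) ^ ℓ * p ^ (k - ℓ))) = 1 := by
  have hαk : α ≤ k := by omega
  have hT : (∑ ℓ ∈ Finset.Icc α k, (k.choose ℓ : ℝ) * ((1 - p) ^ ℓ * p ^ (k - ℓ)))
      = ∑ ℓ ∈ Finset.range α, (k.choose ℓ : ℝ) * (p ^ ℓ * (1 - p) ^ (k - ℓ)) := by
    refine Finset.sum_nbij' (fun ℓ => k - ℓ) (fun ℓ => k - ℓ) ?_ ?_ ?_ ?_ ?_
    · intro ℓ hℓ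
      simp only [mem_Icc] at hℓ
      simp only [mem_range]; omega
    · intro ℓ hℓ
      simp only [mem_range] at hℓ
      simp only [mem_Icc]; omega
    · intro ℓ hℓ; simp only [mem_Icc] at hℓ; show k - (k - ℓ) = ℓ; omega
    · intro ℓ hℓ; simp only [mem_range] at hℓ; show k - (k - ℓ) = ℓ; omega
    · intro ℓ hℓ
      simp only [mem_Icc] at hℓ
      rw [Nat.choose_symm hℓ.2, Nat.sub_sub_self hℓ.2]
      ring
  rw [hT]
  have hsplit : (∑ ℓ ∈ Finset.range α, (k.choose ℓ : ℝ) * (p ^ ℓ * (1 - p) ^ (k - ℓ)))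
      + (∑ ℓ ∈ Finset.Icc α k, (k.choose ℓ : ℝ) * (p ^ ℓ * (1 - p) ^ (k - ℓ)))
      = ∑ ℓ ∈ Finset.range (k + 1), (k.choose ℓ : ℝ) * (p ^ ℓ * (1 - p) ^ (k - ℓ)) := by
    rw [Finset.range_eq_Ico, Finset.range_eq_Ico, ← Finset.Ico_add_one_right_eq_Icc α k]
    exact Finset.sum_Ico_consecutive (fun ℓ => (k.choose ℓ : ℝ) * (p ^ ℓ * (1 - p) ^ (k - ℓ))) (Nat.zero_le α) (show α ≤ k + 1 by omega)
  have hbin : ∑ ℓ ∈ Finset.range (k + 1), (k.choose ℓ : ℝ) * (p ^ ℓ * (1 - p) ^ (k - ℓ)) = 1 := by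
    have h := add_pow p (1 - p) k
    simp only [add_sub_cancel, one_pow] at h
    exact Eq.trans (Finset.sum_congr rfl fun ℓ _ => by ring) h.symm
  linarith [hsplit, hbin]

lemma slushDelta_eq (α k : ℕ) (hα : 1 ≤ α) (hk : k = 2 * α - 1) (p : ℝ) :
    slushDelta k α p
      = (∑ ℓ ∈ Finset.Icc α k, (k.choose ℓ : ℝ) * (p ^ ℓ * (1 - p) ^ (k - ℓ))) - p := by
  unfold slushDelta
  have h1 : ∀ ℓ ∈ Finset.Icc α k,
      (k.choose ℓ : ℝ) * (p ^ ℓ * (1 - p) ^ (k - ℓ + 1) - (1 - p) ^ ℓ * p ^ (k - ℓ + 1))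
      = (1 - p) * ((k.choose ℓ : ℝ) * (p ^ ℓ * (1 - p) ^ (k - ℓ)))
        - p * ((k.choose ℓ : ℝ) * ((1 - p) ^ ℓ * p ^ (k - ℓ))) := by
    intro ℓ _
    rw [pow_succ, pow_succ]; ring
  rw [Finset.sum_congr rfl h1, Finset.sum_sub_distrib, ← Finset.mul_sum, ← Finset.mul_sum]
  linear_combination (-p) * aux_sum_one α k hα hk p

lemma hasDerivAt_S (α k : ℕ) (hαk : α ≤ k) (p : ℝ) :
    HasDerivAt (fun q : ℝ => ∑ ℓ ∈ Finset.Icc α k, (k.choose ℓ : ℝ) * (q ^ ℓ * (1 - q) ^ (k - ℓ)))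
      ((α * k.choose α : ℝ) * p ^ (α - 1) * (1 - p) ^ (k - α)) p := by
  set a : ℕ → ℝ := fun ℓ => (ℓ * k.choose ℓ : ℝ) * p ^ (ℓ - 1) * (1 - p) ^ (k - ℓ) with ha
  have key : HasDerivAt
      (fun q : ℝ => ∑ ℓ ∈ Finset.Icc α k, (k.choose ℓ : ℝ) * (q ^ ℓ * (1 - q) ^ (k - ℓ)))
      (∑ ℓ ∈ Finset.Icc α k, (a ℓ - a (ℓ + 1))) p := by
    apply HasDerivAt.fun_sum
    intro ℓ hℓ
    simp only [mem_Icc] at hℓ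
    have h1 : HasDerivAt (fun q : ℝ => 1 - q) (-1) p := by
      simpa using (hasDerivAt_id p).const_sub 1
    have h2 : HasDerivAt (fun q : ℝ => (1 - q) ^ (k - ℓ))
        (↑(k - ℓ) * (1 - p) ^ (k - ℓ - 1) * (-1)) p :=
      (hasDerivAt_pow (k - ℓ) (1 - p)).comp p h1
    have h3 : HasDerivAt (fun q : ℝ => q ^ ℓ * (1 - q) ^ (k - ℓ))
        ((↑ℓ * p ^ (ℓ - 1)) * (1 - p) ^ (k - ℓ) + p ^ ℓ * (↑(k - ℓ) * (1 - p) ^ (k - ℓ - 1) * (-1)))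
        p := (hasDerivAt_pow ℓ p).mul h2
    have h4 := h3.const_mul (k.choose ℓ : ℝ)
    convert h4 using 1
    · rfl
    have hcast : ((k - ℓ : ℕ) : ℝ) * (k.choose ℓ : ℝ) = ((ℓ + 1 : ℕ) : ℝ) * (k.choose (ℓ + 1) : ℝ) := by
      have := Nat.choose_succ_right_eq k ℓ
      have h5 : (k.choose (ℓ + 1) : ℝ) * (ℓ + 1) = (k.choose ℓ : ℝ) * ((k - ℓ : ℕ) : ℝ) := by
        exact_mod_cast congrArg (Nat.cast : ℕ → ℝ) this
      push_cast at h5 ⊢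
      linarith
    have hexp : k - (ℓ + 1) = k - ℓ - 1 := by omega
    have hexp2 : (ℓ + 1) - 1 = ℓ := by omega
    simp only [ha, hexp, hexp2]
    push_cast at hcast ⊢
    linear_combination (p ^ ℓ * (1 - p) ^ (k - ℓ - 1)) * hcast
  have htel : (∑ ℓ ∈ Finset.Icc α k, (a ℓ - a (ℓ + 1))) = a α - a (k + 1) := by
    rw [← Finset.Ico_add_one_right_eq_Icc α k, Finset.sum_Ico_eq_sum_range]
    have h6 : ∀ i, a (α + i) - a (α + i + 1)
        = (fun j => a (α + j)) i - (fun j => a (α + j)) (i + 1) := by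
      intro i; simp [Nat.add_assoc]
    rw [Finset.sum_congr rfl fun i _ => h6 i, Finset.sum_range_sub' (fun j => a (α + j))]
    congr 2 <;> omega
  have hak1 : a (k + 1) = 0 := by
    simp [ha, Nat.choose_succ_self]
  rw [htel, hak1, sub_zero] at key
  have h7 : a α = (α * k.choose α : ℝ) * p ^ (α - 1) * (1 - p) ^ (k - α) := by
    simp [ha]
  rwa [h7] at key

lemma hasDerivAt_slushDelta (α k : ℕ) (hα : 1 ≤ α) (hk : k = 2 * α - 1) (p : ℝ) :
    HasDerivAt (fun q : ℝ => slushDelta k α q)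
      ((α * k.choose α : ℝ) * p ^ (α - 1) * (1 - p) ^ (α - 1) - 1) p := by
  have hfun : (fun q : ℝ => slushDelta k α q)
      = fun q : ℝ => (∑ ℓ ∈ Finset.Icc α k, (k.choose ℓ : ℝ) * (q ^ ℓ * (1 - q) ^ (k - ℓ))) - q :=
    funext fun q => slushDelta_eq α k hα hk q
  rw [hfun]
  have hαk : α ≤ k := by omega
  have hka : k - α = α - 1 := by omega
  have := (hasDerivAt_S α k hαk p).sub (hasDerivAt_id p)
  rwa [hka] at this

/-- for `α ≥ 2` and `k = 2α − 1`, the second derivative of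
`p ↦ δ^{k,α}(p)` equals `C(k,α)·α·(α−1)·p^{α−2}(1−p)^{α−2}(1−2p)` for every real `p`;
in particular it is `≤ 0` on `[1/2, 1]`. -/
theorem slushDelta_second_deriv (α : ℕ) (hα : 2 ≤ α) (k : ℕ) (hk : k = 2 * α - 1) :
    (∀ p : ℝ, deriv (deriv (fun q : ℝ => slushDelta k α q)) p
        = (k.choose α : ℝ) * α * (α - 1) * p ^ (α - 2) * (1 - p) ^ (α - 2) * (1 - 2 * p))
    ∧ (∀ p : ℝ, 1 / 2 ≤ p → p ≤ 1 →
        deriv (deriv (fun q : ℝ => slushDelta k α q)) p ≤ 0) := by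
  have hα1 : 1 ≤ α := by omega
  have hderiv1 : deriv (fun q : ℝ => slushDelta k α q)
      = fun p : ℝ => (α * k.choose α : ℝ) * p ^ (α - 1) * (1 - p) ^ (α - 1) - 1 :=
    funext fun p => (hasDerivAt_slushDelta α k hα1 hk p).deriv
  have hmain : ∀ p : ℝ, deriv (deriv (fun q : ℝ => slushDelta k α q)) p
      = (k.choose α : ℝ) * α * (α - 1) * p ^ (α - 2) * (1 - p) ^ (α - 2) * (1 - 2 * p) := by
    intro p
    rw [hderiv1]
    have h1 : HasDerivAt (fun q : ℝ => 1 - q) (-1) p := by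
      simpa using (hasDerivAt_id p).const_sub 1
    have h2 : HasDerivAt (fun q : ℝ => (1 - q) ^ (α - 1))
        (↑(α - 1) * (1 - p) ^ (α - 1 - 1) * (-1)) p :=
      (hasDerivAt_pow (α - 1) (1 - p)).comp p h1
    have hA : HasDerivAt (fun q : ℝ => (α * k.choose α : ℝ) * q ^ (α - 1))
        ((α * k.choose α : ℝ) * (↑(α - 1) * p ^ (α - 1 - 1))) p :=
      (hasDerivAt_pow (α - 1) p).const_mul _
    have h4 := (hA.fun_mul h2).sub_const 1
    rw [h4.deriv]
    have he1 : α - 1 - 1 = α - 2 := by omega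
    have he2 : α - 1 = (α - 2) + 1 := by omega
    have hc : ((α - 1 : ℕ) : ℝ) = (α : ℝ) - 1 := by
      push_cast [Nat.cast_sub hα1]; ring
    rw [he1, hc, he2, pow_succ, pow_succ]
    ring
  refine ⟨hmain, fun p hp1 hp2 => ?_⟩
  rw [hmain p]
  have h5 : (0 : ℝ) ≤ (k.choose α : ℝ) * α * (α - 1) * p ^ (α - 2) * (1 - p) ^ (α - 2) := by
    have : (1 : ℝ) ≤ (α : ℝ) := by exact_mod_cast hα1
    have hp : 0 ≤ p := by linarith
    have hp' : 0 ≤ 1 - p := by linarith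
    have hc : (0 : ℝ) ≤ (k.choose α : ℝ) := Nat.cast_nonneg _
    have ha0 : (0 : ℝ) ≤ (α : ℝ) := Nat.cast_nonneg _
    have ha1 : (0 : ℝ) ≤ (α : ℝ) - 1 := by linarith
    exact mul_nonneg (mul_nonneg (mul_nonneg (mul_nonneg hc ha0) ha1)
      (pow_nonneg hp _)) (pow_nonneg hp' _)
  have h6 : (1 - 2 * p : ℝ) ≤ 0 := by linarith
  exact mul_nonpos_of_nonneg_of_nonpos h5 h6
end

section
/- Let α ≥ 2 be a natural number, let k = 2α − 1 (the odd case of the majority threshold α = ⌈(k+1)/2⌉), and let p be a real number with 15/16 ≤ p ≤ 1. Then ∑_{ℓ=0}^{k−α} (k choose ℓ) p^ℓ (1−p)^{k−ℓ} ≤ 4(1−p)^2 and ∑_{ℓ=α}^{k} (k choose ℓ) p^ℓ (1−p)^{k−ℓ} ≥ p. In words: if a fraction p ≥ 15/16 of parties holds opinion 1, the probability that a k-sample shows an α-majority for opinion 0 is at most 4(1−p)^2, and the probability that it shows an α-majority for opinion 1 is at least p. -/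
/-- for `α ≥ 2`, odd `k = 2α − 1` and `p ∈ [15/16, 1]`, the
probability of an `α`-majority for opinion 0 in a `k`-sample is at most `4(1−p)²`
and the probability of an `α`-majority for opinion 1 is at least `p`. -/
theorem switching_probabilities (α : ℕ) (hα : 2 ≤ α) (k : ℕ) (hk : k = 2 * α - 1)
    (p : ℝ) (hp : 15 / 16 ≤ p) (hp1 : p ≤ 1) :
    (∑ ℓ ∈ Finset.range (k - α + 1), (k.choose ℓ : ℝ) * p ^ ℓ * (1 - p) ^ (k - ℓ)
        ≤ 4 * (1 - p) ^ 2)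
    ∧ (p ≤ ∑ ℓ ∈ Finset.Icc α k, (k.choose ℓ : ℝ) * p ^ ℓ * (1 - p) ^ (k - ℓ)) := by
  set q : ℝ := 1 - p with hqdef
  have hq0 : 0 ≤ q := by simp [hqdef]; linarith
  have hq16 : q ≤ 1 / 16 := by simp [hqdef]; linarith
  have hp0 : (0:ℝ) ≤ p := by linarith
  have hrange : k - α + 1 = α := by omega
  -- the tail bound
  have hS : ∑ ℓ ∈ Finset.range (k - α + 1), (k.choose ℓ : ℝ) * p ^ ℓ * (1 - p) ^ (k - ℓ)
      ≤ 4 * (1 - p) ^ 2 := by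
    rw [hrange]
    have step1 : ∑ ℓ ∈ Finset.range α, (k.choose ℓ : ℝ) * p ^ ℓ * (1 - p) ^ (k - ℓ)
        ≤ ∑ ℓ ∈ Finset.range α, (k.choose ℓ : ℝ) * q ^ α := by
      apply Finset.sum_le_sum
      intro ℓ hℓ
      have hℓα : ℓ < α := Finset.mem_range.mp hℓ
      have h1 : p ^ ℓ ≤ 1 := pow_le_one₀ hp0 hp1
      have h2 : (1 - p) ^ (k - ℓ) ≤ q ^ α := by
        rw [← hqdef]
        exact pow_le_pow_of_le_one hq0 (by linarith) (by omega)
      have hc : (0:ℝ) ≤ (k.choose ℓ : ℝ) := by positivity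
      calc (k.choose ℓ : ℝ) * p ^ ℓ * (1 - p) ^ (k - ℓ)
          ≤ (k.choose ℓ : ℝ) * 1 * q ^ α := by
            apply mul_le_mul (by nlinarith) h2 (by positivity) (by positivity)
        _ = (k.choose ℓ : ℝ) * q ^ α := by ring
    have step2 : ∑ ℓ ∈ Finset.range α, (k.choose ℓ : ℝ) * q ^ α
        = (4:ℝ) ^ (α - 1) * q ^ α := by
      rw [← Finset.sum_mul]
      congr 1
      have := Nat.sum_range_choose_halfway (α - 1)
      have hk' : k = 2 * (α - 1) + 1 := by omega
      have hα' : α - 1 + 1 = α := by omega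
      rw [hk', ← hα']
      exact_mod_cast this
    have step3 : (4:ℝ) ^ (α - 1) * q ^ α ≤ 4 * q ^ 2 := by
      obtain ⟨m, hm⟩ : ∃ m, α = m + 2 := ⟨α - 2, by omega⟩
      subst hm
      have h4q : (4 * q) ^ m ≤ 1 := pow_le_one₀ (by linarith) (by linarith)
      have : (4:ℝ) ^ (m + 2 - 1) * q ^ (m + 2) = 4 * ((4*q)^m * q^2) := by
        rw [show m + 2 - 1 = m + 1 from rfl, mul_pow]
        ring
      rw [this]
      nlinarith [pow_nonneg hq0 2, pow_nonneg (by linarith : (0:ℝ) ≤ 4 * q) m]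
    calc _ ≤ _ := step1
      _ = _ := step2
      _ ≤ 4 * q ^ 2 := step3
      _ = 4 * (1 - p) ^ 2 := by rw [hqdef]
  refine ⟨hS, ?_⟩
  -- complementary sums
  have htotal : ∑ ℓ ∈ Finset.range (k - α + 1), (k.choose ℓ : ℝ) * p ^ ℓ * (1 - p) ^ (k - ℓ)
      + ∑ ℓ ∈ Finset.Icc α k, (k.choose ℓ : ℝ) * p ^ ℓ * (1 - p) ^ (k - ℓ) = 1 := by
    have hbin := add_pow p (1 - p) k
    have hsplit : (∑ ℓ ∈ Finset.range (k + 1), (k.choose ℓ : ℝ) * p ^ ℓ * (1 - p) ^ (k - ℓ))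
        = ∑ ℓ ∈ Finset.range (k - α + 1), (k.choose ℓ : ℝ) * p ^ ℓ * (1 - p) ^ (k - ℓ)
        + ∑ ℓ ∈ Finset.Icc α k, (k.choose ℓ : ℝ) * p ^ ℓ * (1 - p) ^ (k - ℓ) := by
      rw [hrange, Finset.range_eq_Ico, ← Finset.Ico_add_one_right_eq_Icc,
        ← Finset.sum_Ico_consecutive _ (Nat.zero_le α) (by omega), Finset.range_eq_Ico]
    rw [← hsplit]
    have : (∑ ℓ ∈ Finset.range (k + 1), (k.choose ℓ : ℝ) * p ^ ℓ * (1 - p) ^ (k - ℓ))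
        = (p + (1 - p)) ^ k := by
      rw [hbin]
      apply Finset.sum_congr rfl
      intro ℓ _
      ring
    rw [this]
    norm_num
  have h4q : 4 * (1 - p) ^ 2 ≤ 1 - p := by nlinarith
  have : ∑ ℓ ∈ Finset.Icc α k, (k.choose ℓ : ℝ) * p ^ ℓ * (1 - p) ^ (k - ℓ)
      = 1 - ∑ ℓ ∈ Finset.range (k - α + 1), (k.choose ℓ : ℝ) * p ^ ℓ * (1 - p) ^ (k - ℓ) := by
    linarith
  rw [this]
  have : q = 1 - p := hqdef
  linarith
end

section
/- Let N be a finite set (the parties). Let x, x' : N → {0,1} denote the opinions of the parties before and after one round of Snowball, and let c, c' : N → ℤ denote the corresponding values of cnt(1) − cnt(0) before and after the round. Assume: (i) for every j ∈ N, c'(j) ∈ {c(j)−1, c(j), c(j)+1}; (ii) for every j, c(j) > 0 implies x(j) = 1 and c(j) < 0 implies x(j) = 0, and likewise c'(j) > 0 implies x'(j) = 1 and c'(j) < 0 implies x'(j) = 0; (iii) for every j, c'(j) = 0 implies x'(j) = x(j). Then ∑_{j∈N} x'(j) − ∑_{j∈N} x(j) = |{j : c(j) = 0 ∧ x(j) =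 0 ∧ c'(j) = 1}| − |{j : c(j) = 0 ∧ x(j) = 1 ∧ c'(j) = −1}|. In words: the absolute progress Δ of a Snowball round equals |Λ^1| − |Λ^0|, where Λ^1 (resp. Λ^0) is the set of parties moving from L^{0,0} to L^{1} (resp. from L^{0,1} to L^{−1}). -/
/-!
A party's opinion can change only if its counter difference crosses or leaves zero. Since the
difference moves by at most one per round, a party outside `L⁰` keeps its opinion, and a party of
`L⁰` changes opinion exactly when it moves to `L¹` holding 0 or to `L⁻¹` holding 1. Summing this
per-party identity gives the theorem.
-/

open Finset

theorem opinion_change_eq_of_counter_step {x x' : ℕ} {c c' : ℤ} (hx : x = 0 ∨ x = 1)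
    (hstep : c' = c - 1 ∨ c' = c ∨ c' = c + 1)
    (hpos : 0 < c → x = 1) (hneg : c < 0 → x = 0)
    (hpos' : 0 < c' → x' = 1) (hneg' : c' < 0 → x' = 0) (hzero' : c' = 0 → x' = x) :
    (x' : ℤ) - x
      = (if c = 0 ∧ x = 0 ∧ c' = 1 then 1 else 0) - (if c = 0 ∧ x = 1 ∧ c' = -1 then 1 else 0) := by
  split_ifs <;> omega

theorem snowball_progress_general {N : Type*} [Fintype N] [DecidableEq N]
    (x x' : N → ℕ) (c c' : N → ℤ)
    (hx : ∀ j, x j = 0 ∨ x j = 1)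
    (hstep : ∀ j, c' j = c j - 1 ∨ c' j = c j ∨ c' j = c j + 1)
    (hpos : ∀ j, 0 < c j → x j = 1) (hneg : ∀ j, c j < 0 → x j = 0)
    (hpos' : ∀ j, 0 < c' j → x' j = 1) (hneg' : ∀ j, c' j < 0 → x' j = 0)
    (hzero' : ∀ j, c' j = 0 → x' j = x j) :
    (∑ j, (x' j : ℤ)) - (∑ j, (x j : ℤ))
      = ((univ.filter (fun j => c j = 0 ∧ x j = 0 ∧ c' j = 1)).card : ℤ)
        - ((univ.filter (fun j => c j = 0 ∧ x j = 1 ∧ c' j = -1)).card : ℤ) := by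
  rw [← sum_boole, ← sum_boole, ← sum_sub_distrib, ← sum_sub_distrib]
  exact sum_congr rfl fun j _ => opinion_change_eq_of_counter_step (hx j) (hstep j) (hpos j)
    (hneg j) (hpos' j) (hneg' j) (hzero' j)

/-- the absolute progress of one Snowball round equals
`|Λ¹| − |Λ⁰|`, where `Λ¹` is the set of parties moving from `L^{0,0}` to `L¹`
and `Λ⁰` is the set of parties moving from `L^{0,1}` to `L^{−1}`. -/
theorem snowball_progress {N : Type*} [Fintype N] [DecidableEq N]
    (x x' : N → ℕ) (c c' : N → ℤ)
    (hx : ∀ j, x j = 0 ∨ x j = 1) (hx' : ∀ j, x' j = 0 ∨ x' j = 1)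
    (hstep : ∀ j, c' j = c j - 1 ∨ c' j = c j ∨ c' j = c j + 1)
    (hpos : ∀ j, 0 < c j → x j = 1) (hneg : ∀ j, c j < 0 → x j = 0)
    (hpos' : ∀ j, 0 < c' j → x' j = 1) (hneg' : ∀ j, c' j < 0 → x' j = 0)
    (hzero' : ∀ j, c' j = 0 → x' j = x j) :
    (∑ j, (x' j : ℤ)) - (∑ j, (x j : ℤ))
      = ((univ.filter (fun j => c j = 0 ∧ x j = 0 ∧ c' j = 1)).card : ℤ)
        - ((univ.filter (fun j => c j = 0 ∧ x j = 1 ∧ c' j = -1)).card : ℤ) :=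
  snowball_progress_general x x' c c' hx hstep hpos hneg hpos' hneg' hzero'
end
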